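/- Every element g of GL₂(A_{f,F}) can be written as g = m·n⁻¹ where m and n both belong to M₂(Ô_F)^♮; that is, M₂(Ô_F)^♮ · (M₂(Ô_F)^♮)⁻¹ = GL₂(A_{f,F}). -/

import Mathlib

open IsDedekindDomain IsDedekindDomain.HeightOneSpectrum NumberField

set_option synthInstance.maxHeartbeats 400000
set_option maxHeartbeats 1000000

noncomputable section

variable (F : Type) [Field F] [NumberField F]

/-- The finite adele ring of the number field `F`. -/
abbrev AF := FiniteAdeleRing (𝓞 F) F

/-- A finite adele is integral if all its components are integral. -/
def IsIntegralAdele (x : AF F) : Prop :=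
  ∀ v : HeightOneSpectrum (𝓞 F), x v ∈ v.adicCompletionIntegers F

/-- Evaluation of a finite adele at a finite place, as a ring homomorphism. -/
def evalAt (v : HeightOneSpectrum (𝓞 F)) : AF F →+* v.adicCompletion F where
  toFun x := x v
  map_one' := rfl
  map_mul' _ _ := rfl
  map_zero' := rfl
  map_add' _ _ := rfl

/-- 2×2 matrices over the finite adele ring. -/
abbrev M2A := Matrix (Fin 2) (Fin 2) (AF F)

/-- M₂(Ô_F)^♮: the submonoid of GL₂(A_{f,F}) of invertible matrices all of whose entries
are integral. -/
def m2Nat : Submonoid (M2A F)ˣ where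
  carrier := {m | ∀ i j, IsIntegralAdele F ((m : M2A F) i j)}
  one_mem' := by
    intro i j v
    show evalAt F v (((1 : (M2A F)ˣ) : M2A F) i j) ∈ _
    rw [Units.val_one, Matrix.one_apply]
    split_ifs
    · rw [map_one]; exact one_mem _
    · rw [map_zero]; exact zero_mem _
  mul_mem' := by
    intro a b ha hb i j v
    show evalAt F v (((a * b : (M2A F)ˣ) : M2A F) i j) ∈ _
    rw [Units.val_mul, Matrix.mul_apply, map_sum]
    exact sum_mem fun k _ => mul_mem (ha i k v) (hb k j v)

/-- The scalar matrix attached to an element of F^×, as an element of GL₂(A_{f,F}). -/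
def scalarUnit : Fˣ →* (M2A F)ˣ :=
  Units.map ((Matrix.scalar (Fin 2)).comp (algebraMap F (AF F))).toMonoidHom

/-!
Every finite adele has a denominator: it is integral at all but finitely many places, and at each
of the remaining places it becomes integral after multiplication by a nonzero element of `𝓞 F`.
Clearing the denominators of the four entries of `g` by one scalar `d ∈ 𝓞 F` gives
`g = (g d) d⁻¹` with both `g d` and `d` in `M₂(Ô_F)^♮`.
-/

open scoped nonZeroDivisors

namespace IsDedekindDomain.FiniteAdeleRing

variable {R : Type*} [CommRing R] [IsDedekindDomain R] {K : Type*} [Field K] [Algebra R K]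
  [IsFractionRing R K]

theorem mul_algebraMap_mem_adicCompletionIntegers_of_dvd {x : FiniteAdeleRing R K}
    {v : HeightOneSpectrum R} {b d : R}
    (hb : (x * algebraMap R _ b) v ∈ v.adicCompletionIntegers K) (hbd : b ∣ d) :
    (x * algebraMap R _ d) v ∈ v.adicCompletionIntegers K := by
  obtain ⟨c, rfl⟩ := hbd
  rw [map_mul, ← mul_assoc]
  exact mul_mem hb (coe_mem_adicCompletionIntegers v c)

theorem exists_nonZeroDivisor_mul_mem_adicCompletionIntegers (x : FiniteAdeleRing R K) :
    ∃ b ∈ R⁰, ∀ v, (x * algebraMap R _ b) v ∈ v.adicCompletionIntegers K := by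
  classical
  have hbad : {v | x v ∉ v.adicCompletionIntegers K}.Finite := x.2
  choose c hc hxc using fun v =>
    adicCompletion.mul_nonZeroDivisor_mem_adicCompletionIntegers v (x v)
  refine ⟨∏ v ∈ hbad.toFinset, c v, prod_mem fun v _ => hc v, fun v => ?_⟩
  by_cases hv : v ∈ hbad.toFinset
  · exact mul_algebraMap_mem_adicCompletionIntegers_of_dvd (hxc v) (Finset.dvd_prod_of_mem c hv)
  · refine mul_algebraMap_mem_adicCompletionIntegers_of_dvd (b := 1) ?_ (one_dvd _)
    simpa using hv

theorem exists_nonZeroDivisor_forall_mul_mem_adicCompletionIntegers {ι : Type*} [Fintype ι]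
    (x : ι → FiniteAdeleRing R K) :
    ∃ d ∈ R⁰, ∀ i v, (x i * algebraMap R _ d) v ∈ v.adicCompletionIntegers K := by
  choose b hb hxb using fun i => exists_nonZeroDivisor_mul_mem_adicCompletionIntegers (x i)
  exact ⟨∏ i, b i, prod_mem fun i _ => hb i, fun i v =>
    mul_algebraMap_mem_adicCompletionIntegers_of_dvd (hxb i v)
      (Finset.dvd_prod_of_mem b (Finset.mem_univ i))⟩

end IsDedekindDomain.FiniteAdeleRing

open IsDedekindDomain.FiniteAdeleRing

section ScalarUnit

variable {F} {d : 𝓞 F}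

theorem val_scalarUnit_mk0_algebraMap (hd : algebraMap (𝓞 F) F d ≠ 0) :
    (scalarUnit F (Units.mk0 _ hd) : M2A F) =
      Matrix.scalar (Fin 2) (algebraMap (𝓞 F) (AF F) d) :=
  congrArg (Matrix.scalar (Fin 2)) (IsScalarTower.algebraMap_apply (𝓞 F) F (AF F) d).symm

theorem scalarUnit_mk0_algebraMap_mem_m2Nat (hd : algebraMap (𝓞 F) F d ≠ 0) :
    scalarUnit F (Units.mk0 _ hd) ∈ m2Nat F := by
  intro i j v
  rw [val_scalarUnit_mk0_algebraMap hd, Matrix.scalar_apply, Matrix.diagonal_apply]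
  split_ifs
  · exact coe_mem_adicCompletionIntegers v d
  · exact zero_mem _

theorem mul_scalarUnit_mk0_algebraMap_mem_m2Nat (hd : algebraMap (𝓞 F) F d ≠ 0)
    {g : (M2A F)ˣ}
    (hg : ∀ i j, IsIntegralAdele F ((g : M2A F) i j * algebraMap (𝓞 F) (AF F) d)) :
    g * scalarUnit F (Units.mk0 _ hd) ∈ m2Nat F := by
  intro i j
  rw [Units.val_mul, val_scalarUnit_mk0_algebraMap hd, Matrix.scalar_apply, Matrix.mul_diagonal]
  exact hg i j

end ScalarUnit

/-- Every element of GL₂(A_{f,F}) is of the form m·n⁻¹ with m, n ∈ M₂(Ô_F)^♮: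
M₂(Ô_F)^♮ · (M₂(Ô_F)^♮)⁻¹ = GL₂(A_{f,F}). -/
theorem m2Nat_mul_m2Nat_inv_eq_GL2 (g : (M2A F)ˣ) :
    ∃ m ∈ m2Nat F, ∃ n ∈ m2Nat F, g = m * n⁻¹ := by
  obtain ⟨d, hd, hgd⟩ :=
    exists_nonZeroDivisor_forall_mul_mem_adicCompletionIntegers (K := F)
      fun p : Fin 2 × Fin 2 => (g : M2A F) p.1 p.2
  have hd' : algebraMap (𝓞 F) F d ≠ 0 :=
    IsFractionRing.to_map_ne_zero_of_mem_nonZeroDivisors hd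
  exact ⟨_, mul_scalarUnit_mk0_algebraMap_mem_m2Nat hd' fun i j => hgd (i, j),
    _, scalarUnit_mk0_algebraMap_mem_m2Nat hd', (mul_inv_cancel_right _ _).symm⟩
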